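/- arXiv:2312.07637 — 4 statements merged into one kernel-verified Lean document; each statement's English description precedes it below -/
import Mathlib

section
/- For any extensive form game G and any formula φ ∈ Φ with ⟦φ⟧ ⊊ Ω(G), it holds that ⟦G^c_i(φ)⟧ = ∅ for every integer i ≥ |Ω(G)| − 1, where |Ω(G)| is the number of outcomes of G. -/
/-- An extensive form game: a nonempty finite rooted tree. Nodes are represented as
positions, i.e. lists of child indices with the *head* being the most recent step,
so the root is `[]` and the parent of `i :: t` is `t`. Each node carries an agent
label (meaningful on non-leaf nodes) and a set of propositional variables
(meaningful on leaf nodes, the outcomes). -/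
structure Game (Agent PropVar : Type) where
  Node : Set (List ℕ)
  root_mem : [] ∈ Node
  downward : ∀ (i : ℕ) (t : List ℕ), i :: t ∈ Node → t ∈ Node
  finite : Node.Finite
  label : List ℕ → Agent
  leafLabel : List ℕ → Set PropVar

namespace Game

variable {Agent PropVar : Type}

/-- A leaf node (outcome) of the game. -/
def IsOutcome (G : Game Agent PropVar) (w : List ℕ) : Prop :=
  w ∈ G.Node ∧ ∀ i : ℕ, i :: w ∉ G.Node

/-- The set `Ω(G)` of outcomes (leaf nodes) of the game. -/
def outcomes (G : Game Agent PropVar) : Set (List ℕ) := {w | G.IsOutcome w}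

/-- `w ⪯ n`: node `n` lies on the simple path (including endpoints) from the root
to `w`; in the position representation this means `n` is a suffix of `w`. -/
def below (w n : List ℕ) : Prop := n <:+ w

/-- A non-root node `n` is an `X`-achievement point by agent `a` if (1) its parent is
labelled with `a`, (2) some outcome `w ⪯ parent(n)` is not in `X`, and (3) every
outcome `w ⪯ n` is in `X`. -/
def AchievePoint (G : Game Agent PropVar) (X : Set (List ℕ)) (a : Agent) (n : List ℕ) : Prop :=
  ∃ (i : ℕ) (t : List ℕ), n = i :: t ∧ n ∈ G.Node ∧ G.label t = a ∧
    (∃ w ∈ G.outcomes, t <:+ w ∧ w ∉ X) ∧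
    (∀ w ∈ G.outcomes, n <:+ w → w ∈ X)

/-- `win_a(X)`: the minimal set of nodes containing `X`, containing every non-leaf
node labelled `a` with at least one child in the set, and containing every non-leaf
node not labelled `a` all of whose children are in the set. -/
inductive Win (G : Game Agent PropVar) (a : Agent) (X : Set (List ℕ)) : List ℕ → Prop
  | mem (w : List ℕ) (hw : w ∈ X) : Win G a X w
  | own (n : List ℕ) (hn : n ∈ G.Node) (hl : G.label n = a) (i : ℕ)
      (hi : i :: n ∈ G.Node) (h : Win G a X (i :: n)) : Win G a X n
  | other (n : List ℕ) (hn : n ∈ G.Node) (hl : G.label n ≠ a)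
      (hne : ∃ i : ℕ, i :: n ∈ G.Node)
      (h : ∀ i : ℕ, i :: n ∈ G.Node → Win G a X (i :: n)) : Win G a X n

/-- The semantic counterfactual-responsibility operator on sets of outcomes:
`Cset a X` is the set of outcomes `w ∈ X` such that some node `n` with `w ⪯ n`
belongs to `win_a(Ω(G) ∖ X)`. -/
def Cset (G : Game Agent PropVar) (a : Agent) (X : Set (List ℕ)) : Set (List ℕ) :=
  {w | w ∈ X ∧ ∃ n : List ℕ, n <:+ w ∧ G.Win a (G.outcomes \ X) n}

/-- The semantic seeing-to-it-responsibility operator on sets of outcomes: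
`Sset a X` is the set of outcomes `w` such that (a) every node `n` with `w ⪯ n`
belongs to `win_a(X)` and (b) there is an `X`-achievement point `n` by agent `a`
with `w ⪯ n`. -/
def Sset (G : Game Agent PropVar) (a : Agent) (X : Set (List ℕ)) : Set (List ℕ) :=
  {w | w ∈ G.outcomes ∧ (∀ n : List ℕ, n <:+ w → G.Win a X n) ∧
    ∃ n : List ℕ, G.AchievePoint X a n ∧ n <:+ w}

end Game

/-- The language `Φ`: `φ ::= p | ¬φ | φ∧φ | C_a φ | S_a φ`. -/
inductive Formula (Agent PropVar : Type) where
  | var : PropVar → Formula Agent PropVar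
  | neg : Formula Agent PropVar → Formula Agent PropVar
  | and : Formula Agent PropVar → Formula Agent PropVar → Formula Agent PropVar
  | C : Agent → Formula Agent PropVar → Formula Agent PropVar
  | S : Agent → Formula Agent PropVar → Formula Agent PropVar

namespace Game

variable {Agent PropVar : Type}

/-- The truth set `⟦φ⟧ ⊆ Ω(G)` of a formula. -/
def truth (G : Game Agent PropVar) : Formula Agent PropVar → Set (List ℕ)
  | .var p => {w | w ∈ G.outcomes ∧ p ∈ G.leafLabel w}
  | .neg φ => G.outcomes \ G.truth φ
  | .and φ ψ => G.truth φ ∩ G.truth ψ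
  | .C a φ => G.Cset a (G.truth φ)
  | .S a φ => G.Sset a (G.truth φ)

/-- The truth set of the `i`-th order counterfactual gap formula
`G^c_0(φ) := φ`, `G^c_{i+1}(φ) := G^c_i(φ) ∧ ⋀_{a∈𝒜} ¬C_a G^c_i(φ)`. -/
def gapCIter (G : Game Agent PropVar) (φ : Formula Agent PropVar) : ℕ → Set (List ℕ)
  | 0 => G.truth φ
  | i + 1 => G.gapCIter φ i ∩ ⋂ a : Agent, (G.outcomes \ G.Cset a (G.gapCIter φ i))

/-- The truth set of the `i`-th order combined gap formula
`G^{c,s}_0(φ) := φ`,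
`G^{c,s}_{i+1}(φ) := G^{c,s}_i(φ) ∧ ⋀_{a∈𝒜} ¬C_a G^{c,s}_i(φ) ∧ ⋀_{a∈𝒜} ¬S_a G^{c,s}_i(φ)`. -/
def gapCSIter (G : Game Agent PropVar) (φ : Formula Agent PropVar) : ℕ → Set (List ℕ)
  | 0 => G.truth φ
  | i + 1 => G.gapCSIter φ i ∩ (⋂ a : Agent, (G.outcomes \ G.Cset a (G.gapCSIter φ i)))
      ∩ (⋂ a : Agent, (G.outcomes \ G.Sset a (G.gapCSIter φ i)))

end Game

/-- `φ` contains no occurrence of the modality `C`. -/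
def Formula.noC {Agent PropVar : Type} : Formula Agent PropVar → Prop
  | .var _ => True
  | .neg φ => φ.noC
  | .and φ ψ => φ.noC ∧ ψ.noC
  | .C _ _ => False
  | .S _ φ => φ.noC

/-- `φ` contains no occurrence of the modality `S`. -/
def Formula.noS {Agent PropVar : Type} : Formula Agent PropVar → Prop
  | .var _ => True
  | .neg φ => φ.noS
  | .and φ ψ => φ.noS ∧ ψ.noS
  | .C _ φ => φ.noS
  | .S _ _ => False

/-! Call a node *mixed* for `X` if outcomes both inside and outside `X` lie below it. If `X` and
its complement in `Ω(G)` are nonempty, the root is mixed; a mixed node `n` of maximal depth has a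
child all of whose outcomes avoid `X`, so the agent moving at `n` can force `Ω(G) ∖ X` from `n`
and is counterfactually responsible for `X` at every outcome of `X` below `n`. Hence each step
`G^c_i(φ) ↦ G^c_{i+1}(φ)` removes an outcome as long as `G^c_i(φ)` is nonempty, and
`⟦φ⟧` has at most `|Ω(G)| - 1` outcomes. -/

theorem List.exists_cons_suffix_of_suffix_of_ne {α : Type*} {s w : List α} (h : s <:+ w)
    (hne : w ≠ s) : ∃ i, i :: s <:+ w := by
  obtain ⟨l, rfl⟩ := h
  rcases List.eq_nil_or_concat l with rfl | ⟨L, i, rfl⟩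
  · exact absurd rfl hne
  · exact ⟨i, L, by simp⟩

namespace Game

variable {Agent PropVar : Type}

theorem mem_Node_of_suffix (G : Game Agent PropVar) {s w : List ℕ} (hs : s <:+ w)
    (hw : w ∈ G.Node) : s ∈ G.Node := by
  obtain ⟨l, rfl⟩ := hs
  induction l with
  | nil => exact hw
  | cons i l ih => exact ih (G.downward i (l ++ s) hw)

theorem node_induction (G : Game Agent PropVar) {P : List ℕ → Prop}
    (step : ∀ n ∈ G.Node, (∀ i, i :: n ∈ G.Node → P (i :: n)) → P n) :
    ∀ n ∈ G.Node, P n := by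
  obtain ⟨B, hB⟩ := (G.finite.image List.length).bddAbove
  have child_lt : ∀ i n, i :: n ∈ G.Node → B - (i :: n).length < B - n.length := by
    intro i n hi
    have := hB ⟨_, hi, rfl⟩
    simp only [List.length_cons] at this ⊢
    omega
  intro n
  induction n using (measure fun n : List ℕ => B - n.length).wf.induction with
  | _ n ih => exact fun hn => step n hn fun i hi => ih _ (child_lt i n hi) hi

theorem eq_of_mem_outcomes_of_suffix (G : Game Agent PropVar) {n w : List ℕ}
    (hn : n ∈ G.outcomes) (hw : w ∈ G.Node) (hnw : n <:+ w) : w = n := by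
  by_contra hne
  obtain ⟨i, hi⟩ := List.exists_cons_suffix_of_suffix_of_ne hnw hne
  exact hn.2 i (G.mem_Node_of_suffix hi hw)

theorem win_of_forall_outcomes_mem (G : Game Agent PropVar) (a : Agent) {Y : Set (List ℕ)} :
    ∀ n ∈ G.Node, (∀ w ∈ G.outcomes, n <:+ w → w ∈ Y) → G.Win a Y n := by
  refine G.node_induction fun n hn ih hY => ?_
  by_cases hleaf : ∃ i, i :: n ∈ G.Node
  · have hchild : ∀ i, i :: n ∈ G.Node → G.Win a Y (i :: n) := fun i hi =>
      ih i hi fun w hw hs => hY w hw ((List.suffix_cons i n).trans hs)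
    by_cases hl : G.label n = a
    · obtain ⟨i, hi⟩ := hleaf
      exact .own n hn hl i hi (hchild i hi)
    · exact .other n hn hl hleaf hchild
  · exact .mem n (hY n ⟨hn, fun i hi => hleaf ⟨i, hi⟩⟩ List.suffix_rfl)

def IsMixed (G : Game Agent PropVar) (X : Set (List ℕ)) (n : List ℕ) : Prop :=
  n ∈ G.Node ∧ (∃ w ∈ G.outcomes, n <:+ w ∧ w ∈ X) ∧ (∃ w ∈ G.outcomes, n <:+ w ∧ w ∉ X)

theorem isMixed_nil (G : Game Agent PropVar) {X : Set (List ℕ)} (hX : X ⊆ G.outcomes)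
    (hne : X.Nonempty) (hco : (G.outcomes \ X).Nonempty) : G.IsMixed X [] := by
  obtain ⟨w, hw⟩ := hne
  obtain ⟨w', hw', hw'X⟩ := hco
  exact ⟨G.root_mem, ⟨w, hX hw, List.nil_suffix, hw⟩, ⟨w', hw', List.nil_suffix, hw'X⟩⟩

theorem exists_mem_Cset (G : Game Agent PropVar) {X : Set (List ℕ)} (hX : X ⊆ G.outcomes)
    (hne : X.Nonempty) (hco : (G.outcomes \ X).Nonempty) : ∃ a, (G.Cset a X).Nonempty := by
  have hfin : {n | G.IsMixed X n}.Finite := G.finite.subset fun n hn => hn.1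
  obtain ⟨n, ⟨hn, ⟨w, hw, hnw, hwX⟩, ⟨w', hw', hnw', hw'X⟩⟩, hmax⟩ :=
    hfin.exists_maximalFor List.length _ ⟨[], G.isMixed_nil hX hne hco⟩
  have hw'n : w' ≠ n := by
    rintro rfl
    exact hw'X (G.eq_of_mem_outcomes_of_suffix hw' hw.1 hnw ▸ hwX)
  obtain ⟨i, hi⟩ := List.exists_cons_suffix_of_suffix_of_ne hnw' hw'n
  have hiNode : i :: n ∈ G.Node := G.mem_Node_of_suffix hi hw'.1
  -- by maximality of `n`, the child `i :: n` is not mixed, and it lies above `w' ∉ X`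
  have hpure : ∀ v ∈ G.outcomes, i :: n <:+ v → v ∈ G.outcomes \ X := fun v hv hiv =>
    ⟨hv, fun hvX => by
      simpa using hmax ⟨hiNode, ⟨v, hv, hiv, hvX⟩, ⟨w', hw', hi, hw'X⟩⟩ (by simp)⟩
  exact ⟨G.label n, w, hwX, n, hnw, .own n hn rfl i hiNode
    (G.win_of_forall_outcomes_mem _ _ hiNode hpure)⟩

theorem truth_subset_outcomes (G : Game Agent PropVar) (φ : Formula Agent PropVar) :
    G.truth φ ⊆ G.outcomes := by
  cases φ with
  | var => exact fun _ hw => hw.1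
  | neg => exact fun _ hw => hw.1
  | and φ => exact fun _ hw => G.truth_subset_outcomes φ hw.1
  | C _ φ => exact fun _ hw => G.truth_subset_outcomes φ hw.1
  | S => exact fun _ hw => hw.1

theorem gapCIter_antitone (G : Game Agent PropVar) (φ : Formula Agent PropVar) :
    Antitone (G.gapCIter φ) :=
  antitone_nat_of_succ_le fun _ _ hw => hw.1

theorem gapCIter_succ_ne (G : Game Agent PropVar) {φ : Formula Agent PropVar}
    (hφ : G.truth φ ⊂ G.outcomes) {j : ℕ} (hne : (G.gapCIter φ j).Nonempty) :
    G.gapCIter φ (j + 1) ≠ G.gapCIter φ j := by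
  have hsub : G.gapCIter φ j ⊆ G.truth φ := G.gapCIter_antitone φ (Nat.zero_le j)
  obtain ⟨v, hv, hvφ⟩ := Set.exists_of_ssubset hφ
  obtain ⟨a, w, hw⟩ := G.exists_mem_Cset (hsub.trans hφ.1) hne ⟨v, hv, fun h => hvφ (hsub h)⟩
  intro heq
  have hw' : w ∈ G.gapCIter φ (j + 1) := heq ▸ hw.1
  exact (Set.mem_iInter.mp hw'.2 a).2 hw

end Game

theorem Set.eq_empty_or_add_ncard_le_of_antitone {α : Type*} {S : ℕ → Set α} (hS : Antitone S)
    (hfin : (S 0).Finite) (hstrict : ∀ j, (S j).Nonempty → S (j + 1) ≠ S j) (j : ℕ) :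
    S j = ∅ ∨ j + (S j).ncard ≤ (S 0).ncard := by
  induction j with
  | zero => simp
  | succ j ih =>
    rcases (S j).eq_empty_or_nonempty with h | h
    · exact .inl (Set.subset_empty_iff.mp (h ▸ hS (j.le_add_right 1)))
    · have hlt := Set.ncard_lt_ncard ((hS (j.le_add_right 1)).ssubset_of_ne (hstrict j h))
        (hfin.subset (hS (Nat.zero_le j)))
      have := ih.resolve_left h.ne_empty
      exact .inr (by omega)

theorem Set.eq_empty_of_antitone_of_ncard_le {α : Type*} {S : ℕ → Set α} (hS : Antitone S)
    (hfin : (S 0).Finite) (hstrict : ∀ j, (S j).Nonempty → S (j + 1) ≠ S j) {j : ℕ}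
    (hj : (S 0).ncard ≤ j) : S j = ∅ := by
  rcases Set.eq_empty_or_add_ncard_le_of_antitone hS hfin hstrict j with h | h
  · exact h
  · exact (Set.ncard_eq_zero (hfin.subset (hS (Nat.zero_le j)))).mp (by omega)

theorem no_higher_order_gapC_general {Agent PropVar : Type}
    (G : Game Agent PropVar) (φ : Formula Agent PropVar)
    (hφ : G.truth φ ⊂ G.outcomes)
    (i : ℕ) (hi : G.outcomes.ncard - 1 ≤ i) :
    G.gapCIter φ i = ∅ := by
  have hΩ : G.outcomes.Finite := G.finite.subset fun _ hw => hw.1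
  have hcard : (G.truth φ).ncard < G.outcomes.ncard := Set.ncard_lt_ncard hφ hΩ
  exact Set.eq_empty_of_antitone_of_ncard_le (G.gapCIter_antitone φ)
    (hΩ.subset (G.truth_subset_outcomes φ)) (fun _ => G.gapCIter_succ_ne hφ)
    (show (G.truth φ).ncard ≤ i by omega)

/-- for any extensive form game `G` and formula `φ` with `⟦φ⟧ ⊊ Ω(G)`,
the truth set `⟦G^c_i(φ)⟧` is empty for every `i ≥ |Ω(G)| − 1`. -/
theorem no_higher_order_gapC {Agent PropVar : Type} [Fintype Agent]
    (G : Game Agent PropVar) (φ : Formula Agent PropVar)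
    (hφ : G.truth φ ⊂ G.outcomes)
    (i : ℕ) (hi : G.outcomes.ncard - 1 ≤ i) :
    G.gapCIter φ i = ∅ :=
  no_higher_order_gapC_general G φ hφ i hi
end

section
/- For any formula φ ∈ Φ and any two distinct agents a, b ∈ 𝒜, the formula S_b S_a φ is semantically equivalent to ⊥: ⟦S_b S_a φ⟧ = ∅ in every extensive form game. -/
namespace Game

variable {Agent PropVar : Type}

/-- Suffix closure of the node set. -/
lemma mem_node_of_append (G : Game Agent PropVar) :
    ∀ (s t : List ℕ), s ++ t ∈ G.Node → t ∈ G.Node := by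
  intro s
  induction s with
  | nil => intro t h; exact h
  | cons i s ih => intro t h; exact ih t (G.downward i (s ++ t) h)

lemma mem_node_of_suffix (G : Game Agent PropVar) {t w : List ℕ}
    (h : t <:+ w) (hw : w ∈ G.Node) : t ∈ G.Node := by
  obtain ⟨s, rfl⟩ := h
  exact G.mem_node_of_append s t hw

/-- `Sset a X ⊆ X` for any set `X`. -/
lemma Sset_subset (G : Game Agent PropVar) (a : Agent) (X : Set (List ℕ)) :
    G.Sset a X ⊆ X := by
  rintro w ⟨hw, -, n, ⟨i, t, rfl, -, -, -, hall⟩, hnw⟩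
  exact hall w hw hnw

lemma length_bound (G : Game Agent PropVar) : ∃ N, ∀ n ∈ G.Node, n.length ≤ N := by
  obtain ⟨N, hN⟩ := (G.finite.image List.length).bddAbove
  exact ⟨N, fun n hn => hN (Set.mem_image_of_mem _ hn)⟩

/-- If every outcome below `r` lies in `Y`, then `r ∈ win_a(Y)`. -/
lemma win_of_all_outcomes (G : Game Agent PropVar) (a : Agent) (Y : Set (List ℕ))
    {r : List ℕ} (hr : r ∈ G.Node)
    (h : ∀ u ∈ G.outcomes, r <:+ u → u ∈ Y) : G.Win a Y r := by
  obtain ⟨N, hN⟩ := G.length_bound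
  have key : ∀ k (r : List ℕ), r ∈ G.Node → N ≤ r.length + k →
      (∀ u ∈ G.outcomes, r <:+ u → u ∈ Y) → G.Win a Y r := by
    intro k
    induction k with
    | zero =>
      intro r hr hlen h
      have hout : r ∈ G.outcomes := by
        refine ⟨hr, fun i hi => ?_⟩
        have := hN _ hi
        simp only [List.length_cons] at this
        omega
      exact .mem r (h r hout (List.suffix_refl r))
    | succ k ih =>
      intro r hr hlen h
      by_cases hchild : ∃ i, i :: r ∈ G.Node
      · have hsub : ∀ j : ℕ, j :: r ∈ G.Node → G.Win a Y (j :: r) := by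
          intro j hj
          refine ih (j :: r) hj (by simp; omega) (fun u hu hsuf => ?_)
          exact h u hu ((List.suffix_cons j r).trans hsuf)
        obtain ⟨i, hi⟩ := hchild
        by_cases hl : G.label r = a
        · exact .own r hr hl i hi (hsub i hi)
        · exact .other r hr hl ⟨i, hi⟩ hsub
      · have hout : r ∈ G.outcomes := ⟨hr, fun i hi => hchild ⟨i, hi⟩⟩
        exact .mem r (h r hout (List.suffix_refl r))
  exact key N r hr (by omega) h

end Game

/-- for distinct agents `a ≠ b`, the formula `S_b S_a φ` is
semantically equivalent to `⊥`. -/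
theorem SS_empty {Agent PropVar : Type} (φ : Formula Agent PropVar)
    (a b : Agent) (hab : a ≠ b) :
    ∀ G : Game Agent PropVar, G.truth (.S b (.S a φ)) = ∅ := by
  intro G
  ext w
  simp only [Set.mem_empty_iff_false, iff_false]
  intro hw
  rw [Game.truth] at hw
  set X := G.truth (Formula.S a φ) with hX
  obtain ⟨hwout, hwinb, n, hach, hnw⟩ := hw
  obtain ⟨i, t, rfl, hnNode, hlt, ⟨w', hw'out, htw', hw'X⟩, hallX⟩ := hach
  have hwX : w ∈ X := hallX w hwout hnw
  rw [hX, Game.truth] at hwX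
  obtain ⟨-, hwina, m, hmach, hmw⟩ := hwX
  obtain ⟨j, s, rfl, hmNode, hls, ⟨v, hvout, hsv, hvφ⟩, hallφ⟩ := hmach
  have htw : t <:+ w := (List.suffix_cons i t).trans hnw
  rcases List.suffix_or_suffix_of_suffix hnw hmw with hcase | hcase
  · rcases List.suffix_cons_iff.mp hcase with heq | hts
    · injection heq with h1 h2
      subst h2
      exact hab (hls ▸ hlt ▸ rfl)
    · have hvX : v ∈ X := hallX v hvout (hts.trans hsv)
      rw [hX, Game.truth] at hvX
      exact hvφ (G.Sset_subset a _ hvX)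
  · rcases List.suffix_cons_iff.mp hcase with heq | hst
    · injection heq with h1 h2
      subst h2
      exact hab (hls ▸ hlt ▸ rfl)
    · apply hw'X
      rw [hX, Game.truth]
      refine ⟨hw'out, ?_,
        ⟨j :: s, ⟨j, s, rfl, hmNode, hls, ⟨v, hvout, hsv, hvφ⟩, hallφ⟩, hst.trans htw'⟩⟩
      intro r hr
      rcases List.suffix_or_suffix_of_suffix hr (hst.trans htw' : j :: s <:+ w') with hc | hc
      · -- r <:+ j :: s : every outcome below r is in ⟦φ⟧ only if j::s <:+ r... handle both via t
        rcases List.suffix_or_suffix_of_suffix hr htw' with hd | hd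
        · exact hwina r (hd.trans htw)
        · exact G.win_of_all_outcomes a _ (G.mem_node_of_suffix hr hw'out.1)
            (fun u hu hru => hallφ u hu (hst.trans (hd.trans hru)))
      · -- j :: s <:+ r
        exact G.win_of_all_outcomes a _ (G.mem_node_of_suffix hr hw'out.1)
          (fun u hu hru => hallφ u hu (hc.trans hru))
end

section
/- For any formula φ ∈ Φ, any node n in an extensive form game, and any two distinct agents a, b ∈ 𝒜, if n ∈ win_a(⟦φ⟧), then n ∉ win_b(⟦¬φ⟧). -/
theorem truth_subset_outcomes {Agent PropVar : Type} (G : Game Agent PropVar)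
    (φ : Formula Agent PropVar) : G.truth φ ⊆ G.outcomes := by
  induction φ with
  | var p => intro w hw; exact hw.1
  | neg φ ih => intro w hw; exact hw.1
  | and φ ψ ihφ ihψ => intro w hw; exact ihφ hw.1
  | C a φ ih => intro w hw; exact ih hw.1
  | S a φ ih => intro w hw; exact hw.1

/-- for distinct agents `a ≠ b` and any node `n`, if
`n ∈ win_a(⟦φ⟧)` then `n ∉ win_b(⟦¬φ⟧)`. -/
theorem win_disjoint {Agent PropVar : Type} (G : Game Agent PropVar)
    (φ : Formula Agent PropVar) (n : List ℕ) (a b : Agent) (hab : a ≠ b)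
    (h : G.Win a (G.truth φ) n) :
    ¬ G.Win b (G.truth (.neg φ)) n := by
  induction h with
  | mem w hw =>
    intro hb
    have hout : w ∈ G.outcomes := truth_subset_outcomes G φ hw
    cases hb with
    | mem _ hw' => exact hw'.2 hw
    | own _ _ _ i hi _ => exact hout.2 i hi
    | other _ _ _ hne _ => obtain ⟨i, hi⟩ := hne; exact hout.2 i hi
  | own n hn hl i hi h ih =>
    intro hb
    cases hb with
    | mem _ hw' => exact hw'.1.2 i hi
    | own _ _ hl' _ _ _ => exact hab (hl ▸ hl'.symm ▸ rfl)
    | other _ _ _ _ h' => exact ih (h' i hi)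
  | other n hn hl hne h ih =>
    intro hb
    cases hb with
    | mem _ hw' => obtain ⟨i, hi⟩ := hne; exact hw'.1.2 i hi
    | own _ _ _ j hj h' => exact ih j hj h'
    | other _ _ _ _ h' => obtain ⟨i, hi⟩ := hne; exact ih i hi (h' i hi)
end

section
/- For any formula φ ∈ Φ, any integer i ≥ 0, and any extensive form game G, ⟦G^{c,s}_i(φ)⟧ ⊆ ⟦G^c_i(φ)⟧. -/
/-- `Win` is monotone in the target set `X`. -/
theorem Game.win_mono {Agent PropVar : Type} {G : Game Agent PropVar} {a : Agent}
    {X Y : Set (List ℕ)} (h : X ⊆ Y) {n : List ℕ} (hn : G.Win a X n) : G.Win a Y n := by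
  induction hn with
  | mem w hw => exact .mem w (h hw)
  | own n hn hl i hi _ ih => exact .own n hn hl i hi ih
  | other n hn hl hne _ ih => exact .other n hn hl hne ih

/-- `⟦G^{c,s}_i(φ)⟧ ⊆ ⟦G^c_i(φ)⟧` for any formula, any `i ≥ 0`, and
any extensive form game. -/
theorem gapCS_subset_gapC {Agent PropVar : Type} [Fintype Agent]
    (G : Game Agent PropVar) (φ : Formula Agent PropVar) (i : ℕ) :
    G.gapCSIter φ i ⊆ G.gapCIter φ i := by
  induction i with
  | zero => exact le_refl _
  | succ i ih =>
      intro w hw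
      obtain ⟨⟨hw1, hw2⟩, _⟩ := hw
      refine ⟨ih hw1, ?_⟩
      simp only [Set.mem_iInter, Set.mem_diff] at hw2 ⊢
      intro a
      obtain ⟨hwo, hnc⟩ := hw2 a
      refine ⟨hwo, fun hC => hnc ?_⟩
      obtain ⟨_, n, hn, hwin⟩ := hC
      exact ⟨hw1, n, hn, Game.win_mono (Set.diff_subset_diff_right ih) hwin⟩
end
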